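/- arXiv:2502.08476 — 2 statements merged into one kernel-verified Lean document; each statement's English description precedes it below -/
import Mathlib

section
/- Let G be a simple undirected graph with no subgraph isomorphic to the complete bipartite graph K_{t,t}, and let X be a set of vertices whose bipartite adjacency matrix Adj_G[X, V∖X] has rank at most r over F_2. Then there exists a separation (L,R) of G of order at most 2^{r+1}(t-1) such that L∖R ⊆ X ⊆ L. -/
/-!
Vertices of `X` with the same row of `Adj_G[X, V∖X]` have the same neighbourhood outside `X`,
and over `𝔽₂` a matrix of rank at most `r` has at most `2 ^ r` distinct rows. For each such
neighbourhood `Q`, let `C_Q ⊆ X` be the vertices of `X` whose neighbourhood outside `X` is `Q`: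
since `C_Q` and `Q` span a complete bipartite graph, one of them has fewer than `t` vertices.
Putting the smaller one into the separator for every `Q` cuts all edges leaving `X`, with at
most `2 ^ r * (t - 1)` vertices.
-/

/-- The bipartite adjacency matrix over F₂ between a vertex set `X` and its complement. -/
def cutMatrix {V : Type} [Fintype V] (G : SimpleGraph V) [DecidableRel G.Adj]
    (X : Finset V) : Matrix {v : V // v ∈ X} {v : V // v ∉ X} (ZMod 2) :=
  fun u w => if G.Adj u.1 w.1 then 1 else 0

open Finset

theorem Matrix.card_image_row_le_pow_rank {K m n : Type*} [Field K] [Fintype K] [Fintype m]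
    [Fintype n] [DecidableEq (n → K)] (M : Matrix m n K) :
    (univ.image M.row).card ≤ Fintype.card K ^ M.rank := by
  set W := Submodule.span K (Set.range M.row)
  calc (univ.image M.row).card = (Set.range M.row).ncard := by
        rw [← Set.ncard_coe_finset, coe_image, coe_univ, Set.image_univ]
    _ ≤ (W : Set (n → K)).ncard := Set.ncard_le_ncard Submodule.subset_span
    _ = Nat.card W := Nat.card_coe_set_eq _ |>.symm
    _ = Fintype.card K ^ M.rank := by
        rw [Module.natCard_eq_pow_finrank (K := K), M.rank_eq_finrank_span_row,
          Nat.card_eq_fintype_card]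

namespace SimpleGraph

variable {V : Type} (G : SimpleGraph V)

lemma card_lt_of_forall_adj {t : ℕ} (hKtt : ¬ ∃ A B : Finset V, Disjoint A B ∧ A.card = t ∧
      B.card = t ∧ ∀ a ∈ A, ∀ b ∈ B, G.Adj a b)
    {C Q : Finset V} (hCQ : Disjoint C Q) (hadj : ∀ a ∈ C, ∀ b ∈ Q, G.Adj a b)
    (hC : t ≤ C.card) : Q.card < t := by
  by_contra! hQ
  obtain ⟨A, hAC, hA⟩ := exists_subset_card_eq hC
  obtain ⟨B, hBQ, hB⟩ := exists_subset_card_eq hQ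
  exact hKtt ⟨A, B, hCQ.mono hAC hBQ, hA, hB, fun a ha b hb ↦ hadj a (hAC ha) b (hBQ hb)⟩

variable [Fintype V] [DecidableEq V] [DecidableRel G.Adj]

def extNbhd (X : Finset V) (u : V) : Finset V := {v ∈ Xᶜ | G.Adj u v}

@[simp]
lemma mem_extNbhd {X : Finset V} {u v : V} : v ∈ G.extNbhd X u ↔ v ∉ X ∧ G.Adj u v := by
  simp [extNbhd]

lemma extNbhd_eq_support_cutMatrix {X : Finset V} {u : V} (hu : u ∈ X) :
    G.extNbhd X u =
      ({w | cutMatrix G X ⟨u, hu⟩ w ≠ 0} : Finset _).map (Function.Embedding.subtype _) := by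
  ext v
  by_cases hv : v ∈ X <;> simp [extNbhd, cutMatrix, hv]

lemma card_image_extNbhd_le (X : Finset V) :
    (X.image (G.extNbhd X)).card ≤ 2 ^ (cutMatrix G X).rank := by
  let support (q : {v // v ∉ X} → ZMod 2) : Finset V :=
    ({w | q w ≠ 0} : Finset _).map (Function.Embedding.subtype _)
  have hsub : X.image (G.extNbhd X) ⊆ (univ.image (cutMatrix G X).row).image support := by
    intro s hs
    obtain ⟨u, hu, rfl⟩ := mem_image.1 hs
    rw [G.extNbhd_eq_support_cutMatrix hu]
    exact mem_image_of_mem _ (mem_image_of_mem _ (mem_univ _))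
  calc (X.image (G.extNbhd X)).card ≤ ((univ.image (cutMatrix G X).row).image support).card :=
        card_le_card hsub
    _ ≤ (univ.image (cutMatrix G X).row).card := card_image_le
    _ ≤ 2 ^ (cutMatrix G X).rank := by
        simpa only [ZMod.card] using (cutMatrix G X).card_image_row_le_pow_rank

lemma exists_separator_card_le {t : ℕ} (hKtt : ¬ ∃ A B : Finset V, Disjoint A B ∧ A.card = t ∧
      B.card = t ∧ ∀ a ∈ A, ∀ b ∈ B, G.Adj a b) (X : Finset V) :
    ∃ S : Finset V, S.card ≤ (X.image (G.extNbhd X)).card * (t - 1) ∧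
      ∀ u ∈ X, u ∉ S → ∀ v ∉ X, v ∉ S → ¬ G.Adj u v := by
  set N := G.extNbhd X
  let cls (Q : Finset V) : Finset V := {u ∈ X | N u = Q}
  let piece (Q : Finset V) : Finset V := if t ≤ (cls Q).card then Q else cls Q
  have hpiece : ∀ Q ∈ X.image N, (piece Q).card ≤ t - 1 := by
    intro Q hQ
    obtain ⟨u, -, rfl⟩ := mem_image.1 hQ
    by_cases hbig : t ≤ (cls (N u)).card
    · have hdisj : Disjoint (cls (N u)) (N u) := Finset.disjoint_left.2
        fun _ ha hNa ↦ (G.mem_extNbhd.1 hNa).1 (mem_filter.1 ha).1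
      have hadj : ∀ a ∈ cls (N u), ∀ b ∈ N u, G.Adj a b := fun a ha b hb ↦ by
        rw [← (mem_filter.1 ha).2] at hb
        exact (G.mem_extNbhd.1 hb).2
      have := G.card_lt_of_forall_adj hKtt hdisj hadj hbig
      simp only [piece, if_pos hbig]
      omega
    · simp only [piece, if_neg hbig]
      omega
  refine ⟨(X.image N).biUnion piece, ?_, ?_⟩
  · calc ((X.image N).biUnion piece).card ≤ ∑ Q ∈ X.image N, (piece Q).card := card_biUnion_le
      _ ≤ ∑ Q ∈ X.image N, (t - 1) := sum_le_sum hpiece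
      _ = (X.image N).card * (t - 1) := by rw [sum_const, smul_eq_mul]
  · intro u hu huS v hvX hvS hadj
    have hpiece_sub : piece (N u) ⊆ (X.image N).biUnion piece :=
      subset_biUnion_of_mem piece (mem_image_of_mem N hu)
    by_cases hbig : t ≤ (cls (N u)).card
    · exact hvS (hpiece_sub (by simpa [piece, hbig, N] using And.intro hvX hadj))
    · exact huS (hpiece_sub (by simp [piece, hbig, cls, hu]))

end SimpleGraph

/-- In a graph with no K_{t,t} subgraph, every vertex set X whose
bipartite adjacency matrix has F₂-rank at most r is captured by a separation of
order at most 2^{r+1}(t-1). -/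
theorem low_rank_set_captured_by_separation {V : Type} [Fintype V] [DecidableEq V]
    (G : SimpleGraph V) [DecidableRel G.Adj] (t r : ℕ)
    (hKtt : ¬ ∃ A B : Finset V, Disjoint A B ∧ A.card = t ∧ B.card = t ∧
      ∀ a ∈ A, ∀ b ∈ B, G.Adj a b)
    (X : Finset V) (hrk : (cutMatrix G X).rank ≤ r) :
    ∃ L R : Finset V, L ∪ R = Finset.univ ∧
      (∀ u ∈ L \ R, ∀ v ∈ R \ L, ¬ G.Adj u v) ∧
      (L ∩ R).card ≤ 2 ^ (r + 1) * (t - 1) ∧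
      L \ R ⊆ X ∧ X ⊆ L := by
  obtain ⟨S, hS_card, hS_sep⟩ := G.exists_separator_card_le hKtt X
  have hLR : (X ∪ S) \ (Xᶜ ∪ S) = X \ S := by
    ext v; simp only [mem_sdiff, mem_union, mem_compl]; tauto
  refine ⟨X ∪ S, Xᶜ ∪ S, ?_, ?_, ?_, hLR ▸ sdiff_subset, subset_union_left⟩
  · rw [union_union_union_comm, union_compl]; exact top_sup_eq _
  · intro u hu v hv
    simp only [mem_sdiff, mem_union, mem_compl] at hu hv
    exact hS_sep u (by tauto) (by tauto) v (by tauto) (by tauto)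
  · rw [← inter_union_distrib_right, inter_compl, empty_union]
    calc S.card ≤ (X.image (G.extNbhd X)).card * (t - 1) := hS_card
      _ ≤ 2 ^ r * (t - 1) := by
          gcongr
          exact (G.card_image_extNbhd_le X).trans (Nat.pow_le_pow_right two_pos hrk)
      _ ≤ 2 ^ (r + 1) * (t - 1) := by gcongr <;> omega
end

section
/- Let G be a directed graph and let X be the set of all vertices reachable from a fixed vertex s. Suppose further that vertices of G are partitioned into at most m classes such that for any u ∈ X and v ∉ X in distinct classes, whether (u,v) or (v,u) is an arc of G depends only on the pair of classes, in the sense that the underlying undirected adjacency in a fixed undirected graph H is determined up to a class-dependent flip. Then in H, the bipartite adjacency matrix Adj_H[X, V∖X] has at most m distinct rows, hence F_2-rank at most m. -/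
/-!
No arc of `G` leaves the reachable set `X`, so for `u ∈ X`, `w ∉ X` the flip must cancel:
`H.Adj u w ↔ A (c u) (c w)`. Hence the row of `u` in `Adj_H[X, V∖X]` depends only on the class
of `u`, and the rank of a matrix is at most its number of distinct rows.
-/

theorem Matrix.rank_le_card_image_row {m n K : Type*} [Fintype m] [Fintype n] [Field K]
    [DecidableEq (n → K)] (M : Matrix m n K) : M.rank ≤ (Finset.univ.image M).card := by
  rw [Matrix.rank_eq_finrank_span_row]
  exact (finrank_span_le_card _).trans_eq (by rw [Set.toFinset_range]; rfl)

theorem Finset.card_image_univ_le_of_eq_comp {ι β γ : Type*} [Fintype ι] [Fintype β]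
    [DecidableEq γ] (g : ι → γ) (c : ι → β) (f : β → γ) (h : ∀ i, g i = f (c i)) :
    (Finset.univ.image g).card ≤ Fintype.card β := by
  classical
  rw [show g = f ∘ c from funext h, ← Finset.image_image]
  exact Finset.card_image_le.trans (Finset.card_le_univ _)

theorem SimpleGraph.adj_iff_of_not_rel_of_flip {V ι : Type*} {H : SimpleGraph V} {c : V → ι}
    {A : ι → ι → Prop} {E : V → V → Prop}
    (hE : ∀ u v : V, E u v ↔ u ≠ v ∧ Xor (H.Adj u v) (A (c u) (c v)))
    {u v : V} (hne : u ≠ v) (hnE : ¬ E u v) : H.Adj u v ↔ A (c u) (c v) := by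
  rw [hE, not_and, xor_iff_not_iff, not_not] at hnE
  exact hnE hne

/-- Let G be a directed flip of an undirected graph H with respect to a
partition into m classes (via class map c and flip relation A), and let X be the set
of vertices reachable from s in G. Then Adj_H[X, V∖X] has at most m distinct rows,
hence F₂-rank at most m. -/
theorem reachable_set_low_rank {V : Type} [Fintype V] [DecidableEq V]
    (H : SimpleGraph V) [DecidableRel H.Adj]
    (m : ℕ) (c : V → Fin m) (A : Fin m → Fin m → Prop) (s : V)
    (E : V → V → Prop)
    (hE : ∀ u v : V, E u v ↔ u ≠ v ∧ Xor' (H.Adj u v) (A (c u) (c v)))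
    (X : Finset V) (hX : ∀ v : V, v ∈ X ↔ Relation.ReflTransGen E s v) :
    (Finset.univ.image
        fun u : {v : V // v ∈ X} => fun w : {v : V // v ∉ X} => cutMatrix H X u w).card ≤ m
    ∧ (cutMatrix H X).rank ≤ m := by
  classical
  have hrow : ∀ u, cutMatrix H X u = fun w => if A (c u) (c w.1) then 1 else 0 := by
    intro u
    funext w
    have hne : u.1 ≠ w.1 := fun h => w.2 (h ▸ u.2)
    have hnE : ¬ E u w := fun h => w.2 ((hX w).2 (((hX u).1 u.2).tail h))
    simp only [cutMatrix, SimpleGraph.adj_iff_of_not_rel_of_flip hE hne hnE]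
  have hcard := Finset.card_image_univ_le_of_eq_comp (cutMatrix H X) (fun u => c u.1)
    (fun j w => if A j (c w.1) then 1 else 0) hrow
  rw [Fintype.card_fin] at hcard
  exact ⟨hcard, (cutMatrix H X).rank_le_card_image_row.trans hcard⟩
end
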